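/- arXiv:2306.14296 — 5 statements merged into one kernel-verified Lean document; each statement's English description precedes it below -/
import Mathlib

section
/- Let a topological group G act continuously on a topological space X, let N ≤ G be a subgroup and L ≤ G an abelian subgroup normalizing N; for z∈X set Δ_z = {ℓ ∈ L : ℓ·z ∈ closure(N·z)}. Suppose x,y ∈ X and ℓ₁, ℓ₂ ∈ L satisfy ℓ₁·y ∈ closure(N·x) and ℓ₂·x ∈ closure(N·y). Then ℓ₁ Δ_y ℓ₂ ⊆ Δ_x; in particular the map ℓ ↦ ℓ₁ ℓ ℓ₂ carries Δ_y into Δ_x. -/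
/-! Translating by an element `g` normalizing `N` sends `closure (N • z)` into
`closure (N • (g • z))`, and orbit closures are transitive. Hence
`(ℓ₁ * ℓ * ℓ₂) • x = ℓ₁ • ℓ • ℓ₂ • x` is pushed from `closure (N • y)` (where `ℓ₂ • x` lies)
back into `closure (N • y)` by `ℓ`, and then into `closure (N • x)` by `ℓ₁`. -/

section OrbitClosure

variable {G X : Type*} [Group G] [TopologicalSpace X] [MulAction G X]
  [ContinuousConstSMul G X] (N : Subgroup G)

lemma closure_image_smul_subset_of_mem_closure {z w : X}
    (hw : w ∈ closure ((fun n : G => n • z) '' (N : Set G))) :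
    closure ((fun n : G => n • w) '' (N : Set G)) ⊆
      closure ((fun n : G => n • z) '' (N : Set G)) := by
  refine closure_minimal ?_ isClosed_closure
  rintro _ ⟨n, hn, rfl⟩
  refine map_mem_closure (continuous_const_smul n) hw ?_
  rintro _ ⟨m, hm, rfl⟩
  exact ⟨n * m, mul_mem hn hm, mul_smul n m z⟩

lemma smul_mem_closure_image_smul_smul_of_mem_normalizer {g : G}
    (hg : g ∈ Subgroup.normalizer (N : Set G)) {z w : X}
    (hw : w ∈ closure ((fun n : G => n • z) '' (N : Set G))) :
    g • w ∈ closure ((fun n : G => n • (g • z)) '' (N : Set G)) := by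
  refine map_mem_closure (continuous_const_smul g) hw ?_
  rintro _ ⟨m, hm, rfl⟩
  refine ⟨g * m * g⁻¹, (Subgroup.mem_normalizer_iff.mp hg m).mp hm, ?_⟩
  simp only [← mul_smul, inv_mul_cancel_right]

lemma smul_mem_closure_image_smul_of_mem_normalizer {g : G}
    (hg : g ∈ Subgroup.normalizer (N : Set G)) {z z' w : X}
    (hw : w ∈ closure ((fun n : G => n • z) '' (N : Set G)))
    (hgz : g • z ∈ closure ((fun n : G => n • z') '' (N : Set G))) :
    g • w ∈ closure ((fun n : G => n • z') '' (N : Set G)) :=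
  closure_image_smul_subset_of_mem_closure N hgz
    (smul_mem_closure_image_smul_smul_of_mem_normalizer N hg hw)

end OrbitClosure

theorem stmt4_general {G X : Type*} [Group G] [TopologicalSpace G]
    [TopologicalSpace X] [MulAction G X] [ContinuousSMul G X]
    (N L : Subgroup G) (hLnorm : L ≤ Subgroup.normalizer (N : Set G))
    (x y : X) (ℓ₁ ℓ₂ : G) (hℓ₁ : ℓ₁ ∈ L) (hℓ₂ : ℓ₂ ∈ L)
    (h₁ : ℓ₁ • y ∈ closure ((fun n : G => n • x) '' (N : Set G)))
    (h₂ : ℓ₂ • x ∈ closure ((fun n : G => n • y) '' (N : Set G))) :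
    ∀ ℓ ∈ {ℓ ∈ (L : Set G) | ℓ • y ∈ closure ((fun n : G => n • y) '' (N : Set G))},
      ℓ₁ * ℓ * ℓ₂ ∈
        {ℓ' ∈ (L : Set G) | ℓ' • x ∈ closure ((fun n : G => n • x) '' (N : Set G))} := by
  rintro ℓ ⟨hℓL, hℓ⟩
  refine ⟨mul_mem (mul_mem hℓ₁ hℓL) hℓ₂, ?_⟩
  rw [mul_smul, mul_smul]
  exact smul_mem_closure_image_smul_of_mem_normalizer N (hLnorm hℓ₁)
    (smul_mem_closure_image_smul_of_mem_normalizer N (hLnorm hℓL) h₂ hℓ) h₁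

/-- Let `G` act continuously on `X`, `N ≤ G` a subgroup and `L ≤ G` an
abelian subgroup normalizing `N`; for `z ∈ X` set
`Δ_z = {ℓ ∈ L : ℓ • z ∈ closure (N • z)}`. If `ℓ₁ • y ∈ closure (N • x)` and
`ℓ₂ • x ∈ closure (N • y)` with `ℓ₁, ℓ₂ ∈ L`, then `ℓ₁ Δ_y ℓ₂ ⊆ Δ_x`. -/
theorem stmt4 {G X : Type*} [Group G] [TopologicalSpace G] [IsTopologicalGroup G]
    [TopologicalSpace X] [MulAction G X] [ContinuousSMul G X]
    (N L : Subgroup G) (hLnorm : L ≤ Subgroup.normalizer (N : Set G))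
    (hLab : ∀ a ∈ L, ∀ b ∈ L, a * b = b * a)
    (x y : X) (ℓ₁ ℓ₂ : G) (hℓ₁ : ℓ₁ ∈ L) (hℓ₂ : ℓ₂ ∈ L)
    (h₁ : ℓ₁ • y ∈ closure ((fun n : G => n • x) '' (N : Set G)))
    (h₂ : ℓ₂ • x ∈ closure ((fun n : G => n • y) '' (N : Set G))) :
    ∀ ℓ ∈ {ℓ ∈ (L : Set G) | ℓ • y ∈ closure ((fun n : G => n • y) '' (N : Set G))},
      ℓ₁ * ℓ * ℓ₂ ∈
        {ℓ' ∈ (L : Set G) | ℓ' • x ∈ closure ((fun n : G => n • x) '' (N : Set G))} :=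
  stmt4_general N L hLnorm x y ℓ₁ ℓ₂ hℓ₁ hℓ₂ h₁ h₂
end

section
/- Let X be a metric space, c > 0, τ : X → ℝ a 1-Lipschitz function, and suppose there exists a curve γ : ℝ → X with d(γ(s),γ(t)) ≤ |s−t| and τ(γ(t)) = t for all s,t, and suppose there is D > 0 such that for every k ∈ ℤ the set τ⁻¹([kc,(k+1)c)) has diameter at most D. Then for all y,z ∈ X: d(y,z) − (2D + 2c) ≤ |τ(y) − τ(z)| ≤ d(y,z). -/
/-- If `τ : X → ℝ` is 1-Lipschitz, there is a unit-speed curve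
`γ : ℝ → X` along which `τ` increases isometrically (`τ (γ t) = t`), and every slab
`τ⁻¹ [kc, (k+1)c)` has diameter at most `D`, then
`dist y z − (2D + 2c) ≤ |τ y − τ z| ≤ dist y z` for all `y, z`. -/
theorem stmt6 {X : Type*} [MetricSpace X] (c : ℝ) (hc : 0 < c)
    (τ : X → ℝ) (hτ : LipschitzWith 1 τ)
    (γ : ℝ → X) (hγ : ∀ s t : ℝ, dist (γ s) (γ t) ≤ |s - t|)
    (hγτ : ∀ t : ℝ, τ (γ t) = t)
    (D : ℝ) (hD : 0 < D)
    (hdiam : ∀ k : ℤ, ∀ p ∈ τ ⁻¹' Set.Ico ((k : ℝ) * c) (((k : ℝ) + 1) * c),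
      ∀ q ∈ τ ⁻¹' Set.Ico ((k : ℝ) * c) (((k : ℝ) + 1) * c), dist p q ≤ D) :
    ∀ y z : X, dist y z - (2 * D + 2 * c) ≤ |τ y - τ z| ∧ |τ y - τ z| ≤ dist y z := by
  have key : ∀ p : X, dist p (γ (τ p)) ≤ D := by
    intro p
    set k : ℤ := ⌊τ p / c⌋ with hk
    have hmem : τ p ∈ Set.Ico ((k : ℝ) * c) (((k : ℝ) + 1) * c) := by
      constructor
      · have := Int.floor_le (τ p / c)
        calc (k : ℝ) * c ≤ (τ p / c) * c := by
              exact mul_le_mul_of_nonneg_right this hc.le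
          _ = τ p := div_mul_cancel₀ _ hc.ne'
      · have := Int.lt_floor_add_one (τ p / c)
        calc τ p = (τ p / c) * c := (div_mul_cancel₀ _ hc.ne').symm
          _ < ((k : ℝ) + 1) * c := by
              exact mul_lt_mul_of_pos_right this hc
    exact hdiam k p hmem (γ (τ p)) (by simpa [hγτ] using hmem)
  intro y z
  constructor
  · have h1 := key y
    have h2 := key z
    have h3 := hγ (τ y) (τ z)
    have h4 : dist y z ≤ dist y (γ (τ y)) + dist (γ (τ y)) (γ (τ z)) + dist (γ (τ z)) z :=
      dist_triangle4 _ _ _ _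
    have h5 : dist (γ (τ z)) z ≤ D := by rw [dist_comm]; exact h2
    nlinarith [hc, hD]
  · have := hτ.dist_le_mul y z
    simpa [Real.dist_eq] using this
end

section
/- Let G be a topological group, Γ ≤ G a subgroup, and let N, A, U be subgroups of G where A = {a_t : t∈ℝ} is a one-parameter subgroup normalizing N, such that a_{−t} u a_t → e as t → +∞ uniformly for u in compact subsets of U. Suppose x = gΓ and y = g'Γ in G/Γ, and there are sequences t_j → +∞, n_j → n₀ in N, ℓ_j → ℓ₀ in A, u_j → u₀ in U with a_{t_j} g = n_j ℓ_j u_j a_{t_j} g' γ_j for some γ_j ∈ Γ. Then ℓ₀ y lies in the closure of N·x in G/Γ; in particular ℓ₀ ∈ {ℓ ∈ A : ℓ·y ∈ closure(N·x)}. -/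
/-!
Conjugating the relation `a_t g = n ℓ u a_t g' γ` by `a_t` gives
`g = (a_{-t} n a_t) ℓ (a_{-t} u a_t) g' γ`. The first factor lies in `N`, so
`ℓ_j (a_{-t_j} u_j a_{t_j}) g' Γ` lies in the `N`-orbit of `gΓ`; since the middle factor tends
to `e` by the uniform contraction of `U`, these points converge to `ℓ₀ g' Γ`.
-/

open Filter Topology

section OneParameterSubgroup

variable {G : Type*} [Group G] {a : ℝ → G}

lemma inv_eq_neg_of_map_add (ha0 : a 0 = 1) (haadd : ∀ s t : ℝ, a (s + t) = a s * a t)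
    (t : ℝ) : (a t)⁻¹ = a (-t) := by
  rw [inv_eq_iff_mul_eq_one, ← haadd, add_neg_cancel, ha0]

lemma commute_of_map_add (haadd : ∀ s t : ℝ, a (s + t) = a s * a t) (s t : ℝ) :
    Commute (a s) (a t) := by
  rw [Commute, SemiconjBy, ← haadd, ← haadd, add_comm]

lemma inv_mul_mul_mem_of_map_add {N : Subgroup G} (ha0 : a 0 = 1)
    (haadd : ∀ s t : ℝ, a (s + t) = a s * a t)
    (hnorm : ∀ t : ℝ, ∀ n ∈ N, a t * n * (a t)⁻¹ ∈ N) (t : ℝ) {n : G} (hn : n ∈ N) :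
    (a t)⁻¹ * n * a t ∈ N := by
  simpa [inv_eq_neg_of_map_add ha0 haadd] using hnorm (-t) n hn

end OneParameterSubgroup

lemma tendsto_conj_one_of_uniform_contraction {G : Type*} [Monoid G] [TopologicalSpace G]
    {a : ℝ → G} {U : Set G}
    (hcontract : ∀ V ∈ 𝓝 (1 : G), ∀ K : Set G, K ⊆ U → IsCompact K →
      ∃ T : ℝ, ∀ t ≥ T, ∀ u ∈ K, a (-t) * u * a t ∈ V)
    {tj : ℕ → ℝ} (htj : Tendsto tj atTop atTop) {uj : ℕ → G} {u₀ : G}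
    (hujU : ∀ j, uj j ∈ U) (hu₀ : u₀ ∈ U) (huj : Tendsto uj atTop (𝓝 u₀)) :
    Tendsto (fun j => a (-tj j) * uj j * a (tj j)) atTop (𝓝 1) := by
  rw [tendsto_def]
  intro V hV
  have hKU : insert u₀ (Set.range uj) ⊆ U := by
    rintro x (rfl | ⟨j, rfl⟩)
    exacts [hu₀, hujU j]
  obtain ⟨T, hT⟩ := hcontract V hV _ hKU huj.isCompact_insert_range
  filter_upwards [htj.eventually_ge_atTop T] with j hj
  exact hT _ hj _ (Set.mem_insert_of_mem _ ⟨j, rfl⟩)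

lemma QuotientGroup.mk_mem_orbit_of_mul_eq {G : Type*} [Group G] {Γ N : Subgroup G}
    {c n ℓ u g g' γ : G} (hn : c⁻¹ * n * c ∈ N) (hℓ : Commute c ℓ) (hγ : γ ∈ Γ)
    (h : c * g = n * ℓ * u * (c * g' * γ)) :
    (QuotientGroup.mk (ℓ * (c⁻¹ * u * c) * g') : G ⧸ Γ) ∈
      (fun m : G => m • (QuotientGroup.mk g : G ⧸ Γ)) '' (N : Set G) := by
  have hg : g = (c⁻¹ * n * c) * (ℓ * (c⁻¹ * u * c) * g' * γ) := by
    have hℓ' : ℓ = c⁻¹ * ℓ * c := by rw [mul_assoc, ← hℓ.eq, inv_mul_cancel_left]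
    calc g = c⁻¹ * (c * g) := by group
      _ = c⁻¹ * n * c * ((c⁻¹ * ℓ * c) * (c⁻¹ * u * c) * g' * γ) := by rw [h]; group
      _ = _ := by rw [← hℓ']
  refine ⟨(c⁻¹ * n * c)⁻¹, N.inv_mem hn, ?_⟩
  change QuotientGroup.mk (_ * g) = _
  rw [hg, inv_mul_cancel_left, QuotientGroup.mk_mul_of_mem _ hγ]

theorem stmt14_general {G : Type*} [Group G] [TopologicalSpace G] [IsTopologicalGroup G]
    (Γ N U : Subgroup G) (a : ℝ → G)
    (ha0 : a 0 = 1) (haadd : ∀ s t : ℝ, a (s + t) = a s * a t)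
    (hnorm : ∀ t : ℝ, ∀ n ∈ N, a t * n * (a t)⁻¹ ∈ N)
    (hcontract : ∀ V ∈ nhds (1 : G), ∀ K : Set G, K ⊆ (U : Set G) → IsCompact K →
      ∃ T : ℝ, ∀ t ≥ T, ∀ u ∈ K, a (-t) * u * a t ∈ V)
    (g g' : G) (tj : ℕ → ℝ) (htj : Tendsto tj atTop atTop)
    (nj : ℕ → G) (hnjN : ∀ j, nj j ∈ N)
    (ℓj : ℕ → G) (ℓ₀ : G) (hℓjA : ∀ j, ℓj j ∈ Set.range a)
    (hℓj : Tendsto ℓj atTop (nhds ℓ₀))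
    (uj : ℕ → G) (u₀ : G) (hujU : ∀ j, uj j ∈ U) (hu₀ : u₀ ∈ U)
    (huj : Tendsto uj atTop (nhds u₀))
    (γj : ℕ → G) (hγj : ∀ j, γj j ∈ Γ)
    (heq : ∀ j, a (tj j) * g = nj j * ℓj j * uj j * (a (tj j) * g' * γj j)) :
    ℓ₀ • (QuotientGroup.mk g' : G ⧸ Γ) ∈
      closure ((fun n : G => n • (QuotientGroup.mk g : G ⧸ Γ)) '' (N : Set G)) := by
  have hε : Tendsto (fun j => (a (tj j))⁻¹ * uj j * a (tj j)) atTop (𝓝 1) := by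
    simpa only [inv_eq_neg_of_map_add ha0 haadd] using
      tendsto_conj_one_of_uniform_contraction hcontract htj hujU hu₀ huj
  have hlim : Tendsto (fun j => ℓj j * ((a (tj j))⁻¹ * uj j * a (tj j)) * g') atTop
      (𝓝 (ℓ₀ * g')) := by
    simpa using (hℓj.mul hε).mul_const g'
  refine mem_closure_of_tendsto ((QuotientGroup.continuous_mk.tendsto _).comp hlim)
    (Eventually.of_forall fun j => ?_)
  obtain ⟨s, hs⟩ := hℓjA j
  exact QuotientGroup.mk_mem_orbit_of_mul_eq
    (inv_mul_mul_mem_of_map_add ha0 haadd hnorm _ (hnjN j))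
    (hs ▸ commute_of_map_add haadd _ _) (hγj j) (heq j)

/-- Bruhat-decomposition sliding argument. Let `G` be a topological
group, `Γ ≤ G`, `N, U ≤ G` subgroups, and `a : ℝ → G` a one-parameter subgroup
normalizing `N`, with `a (−t) u (a t) → e` as `t → +∞` uniformly on compact subsets
of `U`. If `t_j → +∞`, `n_j → n₀` in `N`, `ℓ_j → ℓ₀` in `A`, `u_j → u₀` in `U` and
`a_{t_j} g = n_j ℓ_j u_j a_{t_j} g' γ_j` with `γ_j ∈ Γ`, then
`ℓ₀ • (g'Γ) ∈ closure (N • (gΓ))`. -/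
theorem stmt14 {G : Type*} [Group G] [TopologicalSpace G] [IsTopologicalGroup G]
    (Γ N U : Subgroup G) (a : ℝ → G)
    (ha0 : a 0 = 1) (haadd : ∀ s t : ℝ, a (s + t) = a s * a t)
    (hnorm : ∀ t : ℝ, ∀ n ∈ N, a t * n * (a t)⁻¹ ∈ N)
    (hcontract : ∀ V ∈ nhds (1 : G), ∀ K : Set G, K ⊆ (U : Set G) → IsCompact K →
      ∃ T : ℝ, ∀ t ≥ T, ∀ u ∈ K, a (-t) * u * a t ∈ V)
    (g g' : G) (tj : ℕ → ℝ) (htj : Tendsto tj atTop atTop)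
    (nj : ℕ → G) (n₀ : G) (hnjN : ∀ j, nj j ∈ N) (hn₀ : n₀ ∈ N)
    (hnj : Tendsto nj atTop (nhds n₀))
    (ℓj : ℕ → G) (ℓ₀ : G) (hℓjA : ∀ j, ℓj j ∈ Set.range a) (hℓ₀ : ℓ₀ ∈ Set.range a)
    (hℓj : Tendsto ℓj atTop (nhds ℓ₀))
    (uj : ℕ → G) (u₀ : G) (hujU : ∀ j, uj j ∈ U) (hu₀ : u₀ ∈ U)
    (huj : Tendsto uj atTop (nhds u₀))
    (γj : ℕ → G) (hγj : ∀ j, γj j ∈ Γ)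
    (heq : ∀ j, a (tj j) * g = nj j * ℓj j * uj j * (a (tj j) * g' * γj j)) :
    ℓ₀ • (QuotientGroup.mk g' : G ⧸ Γ) ∈
      closure ((fun n : G => n • (QuotientGroup.mk g : G ⧸ Γ)) '' (N : Set G)) :=
  stmt14_general Γ N U a ha0 haadd hnorm hcontract g g' tj htj nj hnjN ℓj ℓ₀ hℓjA hℓj uj u₀ hujU hu₀
    huj γj hγj heq
end

section
/- Let X be a metric space with a flow (a_t) satisfying d(a_t p, a_s p) ≤ |t−s|, and let τ : X → ℝ satisfy d(p,q) − C_τ ≤ |τ(p) − τ(q)| ≤ d(p,q) for all p,q ∈ X. Suppose x, y ∈ X and there are real numbers b_x, b_y such that t + b_x ≤ τ(a_t x) ≤ τ(x) + t and t + b_y ≤ τ(a_t y) ≤ τ(y) + t for all t ≥ 0. Then sup_{t ≥ 0} d(a_t x, a_t y) ≤ max{|τ(y) − b_x|, |τ(x) − b_y|} + C_τ. -/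
/-- Two quasi-minimizing trajectories facing the same end stay at
uniformly bounded distance: if `t + b_x ≤ τ (a_t x) ≤ τ x + t` and
`t + b_y ≤ τ (a_t y) ≤ τ y + t` for all `t ≥ 0`, then for all `t ≥ 0`,
`dist (a_t x) (a_t y) ≤ max (|τ y − b_x|) (|τ x − b_y|) + C_τ`. -/
theorem stmt16 {X : Type*} [MetricSpace X] (a : ℝ → X → X)
    (h0 : ∀ x, a 0 x = x)
    (hadd : ∀ s t : ℝ, ∀ x, a (s + t) x = a s (a t x))
    (hspeed : ∀ (x : X) (s t : ℝ), dist (a t x) (a s x) ≤ |t - s|)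
    (τ : X → ℝ) (Cτ : ℝ) (hCτ : 0 ≤ Cτ)
    (hτ : ∀ p q : X, dist p q - Cτ ≤ |τ p - τ q| ∧ |τ p - τ q| ≤ dist p q)
    (x y : X) (bx by' : ℝ)
    (hx : ∀ t : ℝ, 0 ≤ t → t + bx ≤ τ (a t x) ∧ τ (a t x) ≤ τ x + t)
    (hy : ∀ t : ℝ, 0 ≤ t → t + by' ≤ τ (a t y) ∧ τ (a t y) ≤ τ y + t) :
    ∀ t : ℝ, 0 ≤ t →
      dist (a t x) (a t y) ≤ max |τ y - bx| |τ x - by'| + Cτ := by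
  intro t ht
  obtain ⟨hx1, hx2⟩ := hx t ht
  obtain ⟨hy1, hy2⟩ := hy t ht
  have h1 := (hτ (a t x) (a t y)).1
  have key : |τ (a t x) - τ (a t y)| ≤ max |τ y - bx| |τ x - by'| := by
    rw [abs_le]
    constructor
    · have h2 : -|τ y - bx| ≤ -(τ y - bx) := neg_le_neg (le_abs_self _)
      have h3 : |τ y - bx| ≤ max |τ y - bx| |τ x - by'| := le_max_left _ _
      linarith
    · have h2 : τ x - by' ≤ |τ x - by'| := le_abs_self _
      have h3 : |τ x - by'| ≤ max |τ y - bx| |τ x - by'| := le_max_right _ _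
      linarith
  linarith
end

section
/- Let X and X' be metric spaces each equipped with an isometric ℤ-action, let c > 0, let τ : X → ℝ and τ' : X' → ℝ be 1-Lipschitz maps satisfying τ(k·p) = τ(p) + kc and τ'(k·p') = τ'(p') + kc for all k ∈ ℤ, and let f : X → X' be a ℤ-equivariant (1+ε)-bi-Lipschitz map for some ε > 0. Assume there is D > 0 such that for every p, q ∈ X there is k ∈ ℤ with |τ(p) − τ(k·q)| ≤ c and d(p, k·q) ≤ c + D. Then there is a constant C' = 2c + (1+ε)(c+D) such that for all p, q ∈ X: | |τ(p) − τ(q)| − |τ'(f(p)) − τ'(f(q))| | ≤ C'. -/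
/-- Heights measured by `τ` on `X` and by `τ' ∘ f` on a
`(1+ε)`-bi-Lipschitz `ℤ`-equivariantly equivalent space `X'` differ by a uniformly
bounded additive error `C' = 2c + (1+ε)(c+D)`. -/
theorem stmt17 {X X' : Type*} [MetricSpace X] [MetricSpace X']
    (Z : ℤ → X → X) (hZiso : ∀ k, Isometry (Z k))
    (hZ0 : ∀ x, Z 0 x = x) (hZadd : ∀ j k : ℤ, ∀ x, Z (j + k) x = Z j (Z k x))
    (Z' : ℤ → X' → X') (hZ'iso : ∀ k, Isometry (Z' k))
    (hZ'0 : ∀ x, Z' 0 x = x) (hZ'add : ∀ j k : ℤ, ∀ x, Z' (j + k) x = Z' j (Z' k x))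
    (c : ℝ) (hc : 0 < c)
    (τ : X → ℝ) (hτ : LipschitzWith 1 τ)
    (τ' : X' → ℝ) (hτ' : LipschitzWith 1 τ')
    (hτeq : ∀ (k : ℤ) (p : X), τ (Z k p) = τ p + (k : ℝ) * c)
    (hτ'eq : ∀ (k : ℤ) (p : X'), τ' (Z' k p) = τ' p + (k : ℝ) * c)
    (f : X → X') (ε : ℝ) (hε : 0 < ε)
    (hfequiv : ∀ (k : ℤ) (p : X), f (Z k p) = Z' k (f p))
    (hfbilip : ∀ p q : X,
      (1 + ε)⁻¹ * dist p q ≤ dist (f p) (f q) ∧ dist (f p) (f q) ≤ (1 + ε) * dist p q)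
    (D : ℝ) (hD : 0 < D)
    (hdiam : ∀ p q : X, ∃ k : ℤ, |τ p - τ (Z k q)| ≤ c ∧ dist p (Z k q) ≤ c + D) :
    ∀ p q : X,
      |(|τ p - τ q| - |τ' (f p) - τ' (f q)|)| ≤ 2 * c + (1 + ε) * (c + D) := by
  intro p q
  obtain ⟨k, hk1, hk2⟩ := hdiam p q
  have h1 : τ (Z k q) = τ q + (k : ℝ) * c := hτeq k q
  have h2 : τ' (f (Z k q)) = τ' (f q) + (k : ℝ) * c := by
    rw [hfequiv]; exact hτ'eq k (f q)
  have h3 : |τ' (f p) - τ' (f (Z k q))| ≤ (1 + ε) * (c + D) := by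
    have := hτ'.dist_le_mul (f p) (f (Z k q))
    have h4 := (hfbilip p (Z k q)).2
    have h5 : dist (f p) (f (Z k q)) ≤ (1 + ε) * (c + D) := by
      refine h4.trans ?_
      have : (0 : ℝ) ≤ 1 + ε := by linarith
      nlinarith
    calc |τ' (f p) - τ' (f (Z k q))| = dist (τ' (f p)) (τ' (f (Z k q))) := by
          rw [Real.dist_eq]
      _ ≤ 1 * dist (f p) (f (Z k q)) := this
      _ ≤ (1 + ε) * (c + D) := by linarith
  have key : |(τ p - τ q) - (τ' (f p) - τ' (f q))| ≤ c + (1 + ε) * (c + D) := by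
    have : (τ p - τ q) - (τ' (f p) - τ' (f q)) =
        (τ p - τ (Z k q)) - (τ' (f p) - τ' (f (Z k q))) := by
      rw [h1, h2]; ring
    rw [this]
    calc |(τ p - τ (Z k q)) - (τ' (f p) - τ' (f (Z k q)))|
        ≤ |τ p - τ (Z k q)| + |τ' (f p) - τ' (f (Z k q))| := abs_sub _ _
      _ ≤ c + (1 + ε) * (c + D) := by linarith
  have := abs_abs_sub_abs_le_abs_sub (τ p - τ q) (τ' (f p) - τ' (f q))
  linarith
end
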